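/- arXiv:alg-geom/9304006 — 2 statements merged into one kernel-verified Lean document; each statement's English description precedes it below -/
import Mathlib

section
/- For every τ in the upper half plane ℍ and every matrix γ = [[a,b],[c,d]] ∈ SL(2,ℤ) with ab ≡ 0 (mod 2) and cd ≡ 0 (mod 2), the function k(τ) = −(θ10(0,τ)⁸ + θ01(0,τ)⁸)/(θ10(0,τ)⁴ · θ01(0,τ)⁴) satisfies k((aτ+b)/(cτ+d)) = k(τ). Equivalently, the set {λ(τ), 1/λ(τ)}, where λ(τ) = −θ01(0,τ)⁴/θ10(0,τ)⁴, is invariant under the action of the group Γ_{1,2}. -/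
/-!
`k` is a rational function of `θ₁₀⁴` and `θ₀₁⁴` that is symmetric and homogeneous of degree zero.
Under `τ ↦ τ + 2` the first is multiplied by `i⁴ = 1` and the second is unchanged; under
`τ ↦ -1/τ` the functional equation of `θ₂` exchanges `θ₁₀` and `θ₀₁` up to the common factor
`(-iτ)^(1/2)`. So `k` is invariant under `S` and `T²`, and these generate `Γ_{1,2}`: a Euclidean
descent on the bottom row `(c, d)` strictly decreases `2|c| + |d|` by right multiplication with
`S` or `T^(±2)`, the parity condition excluding the only stuck case `|c| = |d|`.
-/

open Complex

/-- The theta function with characteristics `a, b ∈ ℝ`: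
`θ[a,b](z,τ) = exp(πi a² τ + 2πi a (z+b)) · θ₂(z + aτ + b, τ)`. -/
noncomputable def thetaChar (a b : ℝ) (z τ : ℂ) : ℂ :=
  Complex.exp (Real.pi * Complex.I * (a : ℂ) ^ 2 * τ +
      2 * Real.pi * Complex.I * (a : ℂ) * (z + (b : ℂ))) *
    jacobiTheta₂ (z + (a : ℂ) * τ + (b : ℂ)) τ

/-- `k(τ) = −(θ10(0,τ)⁸ + θ01(0,τ)⁸)/(θ10(0,τ)⁴ · θ01(0,τ)⁴)`. -/
noncomputable def kFun (τ : ℂ) : ℂ :=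
  -((thetaChar (1 / 2) 0 0 τ) ^ 8 + (thetaChar 0 (1 / 2) 0 τ) ^ 8) /
    ((thetaChar (1 / 2) 0 0 τ) ^ 4 * (thetaChar 0 (1 / 2) 0 τ) ^ 4)

open Real ModularGroup
open scoped MatrixGroups UpperHalfPlane

local notation "θ₁₀" => thetaChar (1 / 2) 0 0
local notation "θ₀₁" => thetaChar 0 (1 / 2) 0

theorem Subgroup.apply_smul_eq_of_mem_closure {G α β : Type*} [Group G] [MulAction G α]
    {s : Set G} {f : α → β} (hs : ∀ g ∈ s, ∀ a, f (g • a) = f a) {g : G}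
    (hg : g ∈ Subgroup.closure s) (a : α) : f (g • a) = f a := by
  induction hg using Subgroup.closure_induction generalizing a with
  | mem g hg => exact hs g hg a
  | one => rw [one_smul]
  | mul g h _ _ ihg ihh => rw [mul_smul, ihg, ihh]
  | inv g _ ih => rw [← ih, smul_inv_smul]

lemma exists_natAbs_add_two_mul_lt {c d : ℤ} (hc : c ≠ 0) (h : c.natAbs < d.natAbs) :
    ∃ k : ℤ, (d + 2 * k * c).natAbs < d.natAbs := by
  rcases le_or_gt 0 c with hc₀ | hc₀ <;> rcases le_or_gt 0 d with hd₀ | hd₀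
  exacts [⟨-1, by omega⟩, ⟨1, by omega⟩, ⟨1, by omega⟩, ⟨-1, by omega⟩]

lemma two_dvd_mul_add_two_mul {x y : ℤ} (k : ℤ) (h : 2 ∣ x * y) : 2 ∣ x * (y + 2 * k * x) := by
  rw [mul_add]
  exact dvd_add h ⟨k * x * x, by ring⟩

namespace ModularGroup

lemma coe_mul_S (γ : SL(2, ℤ)) : ↑(γ * S) = !![γ 0 1, -γ 0 0; γ 1 1, -γ 1 0] := by
  rw [Matrix.SpecialLinearGroup.coe_mul, coe_S, Matrix.eta_fin_two (γ : Matrix (Fin 2) (Fin 2) ℤ),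
    Matrix.mul_fin_two]
  simp

lemma coe_T_sq_zpow (k : ℤ) : ↑((T ^ 2) ^ k) = !![1, 2 * k; 0, 1] := by
  rw [← zpow_natCast, ← zpow_mul, coe_T_zpow, Nat.cast_ofNat]

lemma coe_mul_T_sq_zpow (γ : SL(2, ℤ)) (k : ℤ) :
    ↑(γ * (T ^ 2) ^ k) = !![γ 0 0, γ 0 1 + 2 * k * γ 0 0; γ 1 0, γ 1 1 + 2 * k * γ 1 0] := by
  rw [Matrix.SpecialLinearGroup.coe_mul, coe_T_sq_zpow,
    Matrix.eta_fin_two (γ : Matrix (Fin 2) (Fin 2) ℤ), Matrix.mul_fin_two]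
  simp only [Matrix.of_apply, Matrix.cons_val', Matrix.cons_val_zero, Matrix.cons_val_one,
    Matrix.empty_val', Matrix.cons_val_fin_one]
  congr 1; ring_nf

lemma natAbs_ne_of_two_dvd_mul {γ : SL(2, ℤ)} (hcd : 2 ∣ γ 1 0 * γ 1 1) :
    (γ 1 1).natAbs ≠ (γ 1 0).natAbs := by
  intro h
  have hcop := bottom_row_coprime γ
  rcases Int.natAbs_eq_natAbs_iff.mp h with hd | hd <;> rw [hd] at hcop hcd
  · rcases Int.isUnit_iff.mp (isCoprime_self.mp hcop) with hc | hc <;> rw [hc] at hcd <;>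
      norm_num at hcd
  · rcases Int.isUnit_iff.mp (isCoprime_self.mp (IsCoprime.neg_right_iff _ _ |>.mp hcop)) with
      hc | hc <;> rw [hc] at hcd <;> norm_num at hcd

lemma mem_closure_S_T_sq_of_c_eq_zero {γ : SL(2, ℤ)} (hc : γ 1 0 = 0)
    (hab : 2 ∣ γ 0 0 * γ 0 1) : γ ∈ Subgroup.closure {S, T ^ 2} := by
  have had : γ 0 0 * γ 1 1 = 1 := by
    have hdet := γ.det_coe
    rwa [Matrix.det_fin_two, hc, mul_zero, sub_zero] at hdet
  have hS : S ∈ Subgroup.closure {S, T ^ 2} := Subgroup.subset_closure (by simp)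
  have hT : T ^ 2 ∈ Subgroup.closure {S, T ^ 2} := Subgroup.subset_closure (by simp)
  rcases Int.eq_one_or_neg_one_of_mul_eq_one' had with ⟨ha, hd⟩ | ⟨ha, hd⟩ <;>
    rw [ha] at hab <;> obtain ⟨m, hm⟩ : 2 ∣ γ 0 1 := by simpa using hab
  · convert zpow_mem hT m
    ext i j
    fin_cases i <;> fin_cases j <;> simp [coe_T_sq_zpow, ha, hc, hd, hm]
  · -- `γ = -T^(-b)` and `S² = -1`
    convert mul_mem (mul_mem hS hS) (zpow_mem hT (-m))
    ext i j
    rw [coe_mul_T_sq_zpow, Matrix.SpecialLinearGroup.coe_mul, S_mul_S_eq]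
    fin_cases i <;> fin_cases j <;> simp [ha, hc, hd, hm]

theorem mem_closure_S_T_sq (γ : SL(2, ℤ)) (hab : 2 ∣ γ 0 0 * γ 0 1)
    (hcd : 2 ∣ γ 1 0 * γ 1 1) : γ ∈ Subgroup.closure {S, T ^ 2} := by
  by_cases hc : γ 1 0 = 0
  · exact mem_closure_S_T_sq_of_c_eq_zero hc hab
  rcases lt_or_gt_of_ne (natAbs_ne_of_two_dvd_mul hcd) with hlt | hgt
  · have hγS := mem_closure_S_T_sq (γ * S) (by rw [coe_mul_S]; simpa [mul_comm] using hab)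
      (by rw [coe_mul_S]; simpa [mul_comm] using hcd)
    simpa using mul_mem hγS (inv_mem (Subgroup.subset_closure (by simp) : S ∈ _))
  · obtain ⟨k, hk⟩ := exists_natAbs_add_two_mul_lt hc hgt
    have hγT := mem_closure_S_T_sq (γ * (T ^ 2) ^ k)
      (by rw [coe_mul_T_sq_zpow]; exact two_dvd_mul_add_two_mul k hab)
      (by rw [coe_mul_T_sq_zpow]; exact two_dvd_mul_add_two_mul k hcd)
    simpa using mul_mem hγT (inv_mem (zpow_mem (Subgroup.subset_closure (by simp) : T ^ 2 ∈ _) k))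
termination_by 2 * (γ 1 0).natAbs + (γ 1 1).natAbs
decreasing_by
  all_goals
    simp only [coe_mul_S, coe_mul_T_sq_zpow, Matrix.of_apply, Matrix.cons_val', Matrix.cons_val_zero,
      Matrix.cons_val_fin_one, Matrix.cons_val_one, Int.natAbs_neg]
    omega

end ModularGroup

lemma thetaChar_half_zero (τ : ℂ) :
    θ₁₀ τ = cexp (π * I * τ / 4) * jacobiTheta₂ (τ / 2) τ := by
  simp only [thetaChar]
  push_cast
  ring_nf

lemma thetaChar_zero_half (τ : ℂ) : θ₀₁ τ = jacobiTheta₂ (1 / 2) τ := by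
  simp [thetaChar]

lemma thetaChar_half_zero_add_two (τ : ℂ) : θ₁₀ (τ + 2) = I * θ₁₀ τ := by
  rw [thetaChar_half_zero, thetaChar_half_zero, add_div, div_self two_ne_zero,
    jacobiTheta₂_add_right, jacobiTheta₂_add_left,
    show π * I * (τ + 2) / 4 = π / 2 * I + π * I * τ / 4 by ring, Complex.exp_add,
    exp_pi_div_two_mul_I, mul_assoc]

lemma thetaChar_zero_half_add_two (τ : ℂ) : θ₀₁ (τ + 2) = θ₀₁ τ := by
  rw [thetaChar_zero_half, thetaChar_zero_half, jacobiTheta₂_add_right]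

lemma cpow_half_ne_zero {τ : ℂ} (hτ : τ ≠ 0) : (-I * τ) ^ (1 / 2 : ℂ) ≠ 0 := by
  simp [cpow_eq_zero_iff, hτ]

lemma thetaChar_zero_half_neg_inv {τ : ℂ} (hτ : τ ≠ 0) :
    θ₀₁ (-1 / τ) = (-I * τ) ^ (1 / 2 : ℂ) * θ₁₀ τ := by
  have h := jacobiTheta₂_functional_equation (τ / 2) τ
  rw [show τ / 2 / τ = 1 / 2 by field_simp,
    show -π * I * (τ / 2) ^ 2 / τ = -(π * I * τ / 4) by field_simp; ring] at h
  rw [thetaChar_zero_half, thetaChar_half_zero, h, Complex.exp_neg]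
  field_simp [cpow_half_ne_zero hτ, Complex.exp_ne_zero]

lemma thetaChar_half_zero_neg_inv {τ : ℂ} (hτ : τ ≠ 0) :
    θ₁₀ (-1 / τ) = (-I * τ) ^ (1 / 2 : ℂ) * θ₀₁ τ := by
  have h := jacobiTheta₂_functional_equation (1 / 2) τ
  rw [show -π * I * (1 / 2) ^ 2 / τ = π * I * (-1 / τ) / 4 by ring] at h
  rw [thetaChar_zero_half, thetaChar_half_zero, h, show -1 / τ / 2 = -(1 / 2 / τ) by ring,
    jacobiTheta₂_neg_left]
  field_simp [cpow_half_ne_zero hτ, Complex.exp_ne_zero]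

lemma kFun_add_two (τ : ℂ) : kFun (τ + 2) = kFun τ := by
  simp only [kFun, thetaChar_half_zero_add_two, thetaChar_zero_half_add_two, mul_pow,
    I_pow_four, show I ^ 8 = (I ^ 4) ^ 2 by ring, one_pow, one_mul]

lemma kFun_neg_inv {τ : ℂ} (hτ : τ ≠ 0) : kFun (-1 / τ) = kFun τ := by
  set r := (-I * τ) ^ (1 / 2 : ℂ)
  have hr : r ^ 8 ≠ 0 := pow_ne_zero 8 (cpow_half_ne_zero hτ)
  set x := θ₁₀ τ
  set y := θ₀₁ τ
  calc kFun (-1 / τ) = r ^ 8 * -(x ^ 8 + y ^ 8) / (r ^ 8 * (x ^ 4 * y ^ 4)) := by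
        rw [kFun, thetaChar_half_zero_neg_inv hτ, thetaChar_zero_half_neg_inv hτ]
        ring
    _ = kFun τ := mul_div_mul_left _ _ hr

lemma kFun_T_sq_smul (τ : ℍ) : kFun ↑(T ^ 2 • τ) = kFun τ := by
  rw [← zpow_natCast, coe_T_zpow_smul_eq]
  exact_mod_cast kFun_add_two τ

lemma kFun_S_smul (τ : ℍ) : kFun ↑(S • τ) = kFun τ := by
  rw [UpperHalfPlane.modular_S_smul, UpperHalfPlane.coe_mk, show (-(τ : ℂ))⁻¹ = -1 / τ by ring]
  exact kFun_neg_inv τ.ne_zero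

/-- `k` is invariant under the action of Γ_{1,2} ⊂ SL(2,ℤ) on the upper half
plane: for γ = [[a,b],[c,d]] ∈ SL(2,ℤ) with ab ≡ 0 and cd ≡ 0 (mod 2),
`k((aτ+b)/(cτ+d)) = k(τ)`. -/
theorem kFun_Gamma12_invariant (τ : UpperHalfPlane)
    (γ : Matrix.SpecialLinearGroup (Fin 2) ℤ)
    (hab : γ 0 0 * γ 0 1 % 2 = 0) (hcd : γ 1 0 * γ 1 1 % 2 = 0) :
    kFun (((γ 0 0 : ℂ) * (τ : ℂ) + (γ 0 1 : ℂ)) / ((γ 1 0 : ℂ) * (τ : ℂ) + (γ 1 1 : ℂ))) =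
      kFun (τ : ℂ) := by
  have hγ := mem_closure_S_T_sq γ (Int.dvd_of_emod_eq_zero hab) (Int.dvd_of_emod_eq_zero hcd)
  have h := Subgroup.apply_smul_eq_of_mem_closure (f := fun z : ℍ ↦ kFun z) ?_ hγ τ
  · rw [UpperHalfPlane.coe_specialLinearGroup_apply] at h
    simpa using h
  · rintro g (rfl | rfl) z
    exacts [kFun_S_smul z, kFun_T_sq_smul z]
end

section
/- For every τ in the upper half plane ℍ, the value k(τ) = −(θ10(0,τ)⁸ + θ01(0,τ)⁸)/(θ10(0,τ)⁴ · θ01(0,τ)⁴) is different from 2. -/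
open Complex

/-!
Writing `a = θ₂⁴`, `b = θ₄⁴`, the equation `k(τ) = 2` says `(a + b)² = 0`, while Jacobi's identity
gives `a + b = θ₃⁴`; so it suffices that `θ₃` has no zero in `ℍ`.

Both facts come from the addition formula for `θ(x, τ) θ(y, τ)`, obtained by splitting the
double series according to the parity of `m + n`. Jacobi's identity follows from three of its
specialisations (Landen's duplication formulas). For the zeros: `θ₃(τ) θ₄(τ) = θ₄(2τ)²` and
`θ₄(τ) = θ₃(τ + 1)`, so a zero of `θ₃` at `τ` produces one at `2τ + 1`; iterating pushes the
imaginary part above `1`, where `‖θ₃ - 1‖ < 1`.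
-/

open Real

lemma hasSum_jacobiTheta₂_term_mul (x y : ℂ) {τ : ℂ} (hτ : 0 < im τ) :
    HasSum (fun p : ℤ × ℤ => jacobiTheta₂_term p.1 x τ * jacobiTheta₂_term p.2 y τ)
      (jacobiTheta₂ x τ * jacobiTheta₂ y τ) := by
  have hs (z : ℂ) : Summable fun n : ℤ => ‖jacobiTheta₂_term n z τ‖ := by
    refine (summable_pow_mul_jacobiTheta₂_term_bound |im z| hτ 0).of_nonneg_of_le
      (fun n => norm_nonneg _) (fun n => ?_)
    simpa only [pow_zero, one_mul] using norm_jacobiTheta₂_term_le hτ le_rfl le_rfl n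
  exact HasSum.mul (f := (jacobiTheta₂_term · x τ)) (g := (jacobiTheta₂_term · y τ))
    (hasSum_jacobiTheta₂_term x hτ) (hasSum_jacobiTheta₂_term y hτ)
    ((hs x).mul_norm (hs y)).of_norm

/-- The two pieces parametrize the pairs `(m, n)` with `m + n` even, resp. odd. -/
def addSubSplit : (ℤ × ℤ) ⊕ (ℤ × ℤ) → ℤ × ℤ :=
  Sum.elim (fun p => (p.1 + p.2, p.1 - p.2)) (fun p => (p.1 + p.2 + 1, p.1 - p.2))

lemma addSubSplit_bijective : Function.Bijective addSubSplit := by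
  constructor
  · rintro (⟨u, v⟩ | ⟨u, v⟩) (⟨a, b⟩ | ⟨a, b⟩) h <;>
      simp only [addSubSplit, Sum.elim_inl, Sum.elim_inr, Prod.mk.injEq, Sum.inl.injEq,
        Sum.inr.injEq, reduceCtorEq] at h ⊢ <;> omega
  · rintro ⟨m, n⟩
    rcases Int.even_or_odd (m + n) with ⟨k, hk⟩ | ⟨k, hk⟩
    · exact ⟨Sum.inl (k, m - k), by simp only [addSubSplit, Sum.elim_inl, Prod.mk.injEq]; omega⟩
    · exact ⟨Sum.inr (k, m - 1 - k),
        by simp only [addSubSplit, Sum.elim_inr, Prod.mk.injEq]; omega⟩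

noncomputable def addSubSplitEquiv : (ℤ × ℤ) ⊕ (ℤ × ℤ) ≃ ℤ × ℤ :=
  Equiv.ofBijective addSubSplit addSubSplit_bijective

theorem jacobiTheta₂_mul_jacobiTheta₂ (x y : ℂ) {τ : ℂ} (hτ : 0 < im τ) :
    jacobiTheta₂ x τ * jacobiTheta₂ y τ =
      jacobiTheta₂ (x + y) (2 * τ) * jacobiTheta₂ (x - y) (2 * τ) +
        cexp (π * I * τ + 2 * π * I * x) *
          (jacobiTheta₂ (x + y + τ) (2 * τ) * jacobiTheta₂ (x - y + τ) (2 * τ)) := by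
  have h2τ : 0 < im (2 * τ) := by simpa using hτ
  set f := fun p : ℤ × ℤ => jacobiTheta₂_term p.1 x τ * jacobiTheta₂_term p.2 y τ
  have heven : f ∘ addSubSplitEquiv ∘ Sum.inl =
      fun p => jacobiTheta₂_term p.1 (x + y) (2 * τ) * jacobiTheta₂_term p.2 (x - y) (2 * τ) := by
    funext ⟨u, v⟩
    simp only [f, Function.comp_apply, addSubSplitEquiv, Equiv.ofBijective_apply, addSubSplit,
      Sum.elim_inl, jacobiTheta₂_term, ← Complex.exp_add]
    congr 1; push_cast; ring
  have hodd : f ∘ addSubSplitEquiv ∘ Sum.inr = fun p => cexp (π * I * τ + 2 * π * I * x) *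
      (jacobiTheta₂_term p.1 (x + y + τ) (2 * τ) * jacobiTheta₂_term p.2 (x - y + τ) (2 * τ)) := by
    funext ⟨u, v⟩
    simp only [f, Function.comp_apply, addSubSplitEquiv, Equiv.ofBijective_apply, addSubSplit,
      Sum.elim_inr, jacobiTheta₂_term, ← Complex.exp_add]
    congr 1; push_cast; ring
  refine (addSubSplitEquiv.hasSum_iff.mpr (hasSum_jacobiTheta₂_term_mul x y hτ)).unique
    (HasSum.sum ?_ ?_)
  · rw [Function.comp_assoc, heven]
    exact hasSum_jacobiTheta₂_term_mul _ _ h2τ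
  · rw [Function.comp_assoc, hodd]
    exact (hasSum_jacobiTheta₂_term_mul _ _ h2τ).mul_left _

/-- `z ↦ -z + τ + 1` fixes `(1 + τ)/2`, and by quasi-periodicity it multiplies `θ(·, τ)` by `-1`
there. -/
lemma jacobiTheta₂_half_add_half_self (τ : ℂ) : jacobiTheta₂ (1 / 2 + τ / 2) τ = 0 := by
  have h := jacobiTheta₂_add_left' (-(1 / 2 + τ / 2)) τ
  rw [jacobiTheta₂_neg_left, show -π * I * (τ + 2 * -(1 / 2 + τ / 2)) = π * I by ring,
    exp_pi_mul_I, ← jacobiTheta₂_add_left,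
    show -(1 / 2 + τ / 2) + τ + 1 = 1 / 2 + τ / 2 by ring] at h
  linear_combination h / 2

/-- `θ₂(τ) = θ[1/2,0](0,τ)`. Mathlib's `jacobiTheta` plays the role of `θ₃ = θ[0,0](0,·)`. -/
noncomputable def thetaTwo (τ : ℂ) : ℂ := cexp (π * I * τ / 4) * jacobiTheta₂ (τ / 2) τ

/-- `θ₄(τ) = θ[0,1/2](0,τ)`. -/
noncomputable def thetaFour (τ : ℂ) : ℂ := jacobiTheta₂ (1 / 2) τ

lemma thetaTwo_two_mul_sq (τ : ℂ) :
    thetaTwo (2 * τ) ^ 2 = cexp (π * I * τ) * jacobiTheta₂ τ (2 * τ) ^ 2 := by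
  rw [thetaTwo, mul_pow, ← Complex.exp_nat_mul, mul_div_cancel_left₀ τ two_ne_zero]
  congr 2; push_cast; ring

lemma jacobiTheta_sq {τ : ℂ} (hτ : 0 < im τ) :
    jacobiTheta τ ^ 2 = jacobiTheta (2 * τ) ^ 2 + thetaTwo (2 * τ) ^ 2 := by
  have h := jacobiTheta₂_mul_jacobiTheta₂ 0 0 hτ
  simp only [add_zero, sub_zero, zero_add, mul_zero] at h
  rw [jacobiTheta_eq_jacobiTheta₂, jacobiTheta_eq_jacobiTheta₂, thetaTwo_two_mul_sq]
  linear_combination h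

lemma thetaFour_sq {τ : ℂ} (hτ : 0 < im τ) :
    thetaFour τ ^ 2 = jacobiTheta (2 * τ) ^ 2 - thetaTwo (2 * τ) ^ 2 := by
  have h := jacobiTheta₂_mul_jacobiTheta₂ (1 / 2) (1 / 2) hτ
  rw [add_halves, sub_self, zero_add, add_comm 1 τ, jacobiTheta₂_add_left,
    show jacobiTheta₂ 1 (2 * τ) = jacobiTheta₂ 0 (2 * τ) by
      simpa using jacobiTheta₂_add_left 0 (2 * τ),
    show π * I * τ + 2 * π * I * (1 / 2) = π * I * τ + π * I by ring, Complex.exp_add,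
    exp_pi_mul_I] at h
  rw [thetaFour, jacobiTheta_eq_jacobiTheta₂, thetaTwo_two_mul_sq]
  linear_combination h

lemma thetaTwo_sq {τ : ℂ} (hτ : 0 < im τ) :
    thetaTwo τ ^ 2 = 2 * thetaTwo (2 * τ) * jacobiTheta (2 * τ) := by
  have h := jacobiTheta₂_mul_jacobiTheta₂ (τ / 2) (τ / 2) hτ
  rw [add_halves, sub_self, zero_add, show τ + τ = 0 + 2 * τ by ring, jacobiTheta₂_add_left'] at h
  have hexp : cexp (π * I * τ + 2 * π * I * (τ / 2)) * cexp (-π * I * (2 * τ + 2 * 0)) = 1 := by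
    rw [← Complex.exp_add, ← Complex.exp_zero]; congr 1; ring
  have hsq : cexp (π * I * τ / 4) ^ 2 = cexp (π * I * (2 * τ) / 4) := by
    rw [← Complex.exp_nat_mul]; congr 1; push_cast; ring
  rw [thetaTwo, thetaTwo, mul_div_cancel_left₀ τ two_ne_zero, jacobiTheta_eq_jacobiTheta₂,
    mul_pow, hsq]
  linear_combination cexp (π * I * (2 * τ) / 4) * h +
    cexp (π * I * (2 * τ) / 4) * jacobiTheta₂ τ (2 * τ) * jacobiTheta₂ 0 (2 * τ) * hexp

lemma jacobiTheta_mul_thetaFour {τ : ℂ} (hτ : 0 < im τ) :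
    jacobiTheta τ * thetaFour τ = thetaFour (2 * τ) ^ 2 := by
  have h := jacobiTheta₂_mul_jacobiTheta₂ 0 (1 / 2) hτ
  rw [zero_sub, jacobiTheta₂_neg_left, show 0 + 1 / 2 + τ = 1 / 2 + 2 * τ / 2 by ring,
    jacobiTheta₂_half_add_half_self] at h
  rw [jacobiTheta_eq_jacobiTheta₂, thetaFour, thetaFour, h, zero_add]
  ring

theorem jacobiTheta_pow_four {τ : ℂ} (hτ : 0 < im τ) :
    jacobiTheta τ ^ 4 = thetaTwo τ ^ 4 + thetaFour τ ^ 4 := by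
  linear_combination (jacobiTheta τ ^ 2 + jacobiTheta (2 * τ) ^ 2 + thetaTwo (2 * τ) ^ 2) *
      jacobiTheta_sq hτ -
    (thetaFour τ ^ 2 + jacobiTheta (2 * τ) ^ 2 - thetaTwo (2 * τ) ^ 2) * thetaFour_sq hτ -
    (thetaTwo τ ^ 2 + 2 * thetaTwo (2 * τ) * jacobiTheta (2 * τ)) * thetaTwo_sq hτ

lemma thetaFour_eq_jacobiTheta_add_one (τ : ℂ) : thetaFour τ = jacobiTheta (τ + 1) := by
  rw [thetaFour, jacobiTheta_eq_jacobiTheta₂, jacobiTheta₂, jacobiTheta₂]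
  refine tsum_congr fun n => ?_
  obtain ⟨k, hk⟩ := Int.even_mul_pred_self n
  have hk' : (n : ℂ) * (n - 1) = k + k := by exact_mod_cast hk
  refine Complex.exp_eq_exp_iff_exists_int.mpr ⟨-k, ?_⟩
  push_cast
  linear_combination (-π * I) * hk'

lemma jacobiTheta_two_mul_add_one_eq_zero {τ : ℂ} (hτ : 0 < im τ) (h : jacobiTheta τ = 0) :
    jacobiTheta (2 * τ + 1) = 0 := by
  have h4 := jacobiTheta_mul_thetaFour hτ
  rwa [h, zero_mul, eq_comm, sq_eq_zero_iff, thetaFour_eq_jacobiTheta_add_one] at h4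

lemma jacobiTheta_ne_zero_of_one_le_im {τ : ℂ} (h : 1 ≤ im τ) : jacobiTheta τ ≠ 0 := by
  intro h0
  set r := rexp (-π * im τ)
  have hr : r < 1 / 3 := calc
    r ≤ rexp (-2) := exp_le_exp.mpr (by nlinarith [pi_gt_three])
    _ < 1 / 3 := by
      rw [Real.exp_neg, inv_lt_comm₀ (exp_pos 2) (by norm_num)]
      linarith [add_one_lt_exp (two_ne_zero (α := ℝ))]
  -- `‖θ₃(τ) - 1‖ ≤ 2r / (1 - r)`, which is `< 1` as soon as `r < 1/3`
  have hb := norm_jacobiTheta_sub_one_le (τ := τ) (by linarith)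
  rw [h0, zero_sub, norm_neg, norm_one, div_mul_eq_mul_div,
    le_div_iff₀ (by linarith)] at hb
  linarith

theorem jacobiTheta_ne_zero {τ : ℂ} (hτ : 0 < im τ) : jacobiTheta τ ≠ 0 := by
  suffices ∀ k : ℕ, ∀ τ : ℂ, 0 < im τ → 1 ≤ 2 ^ k * im τ → jacobiTheta τ ≠ 0 by
    obtain ⟨k, hk⟩ := pow_unbounded_of_one_lt (im τ)⁻¹ one_lt_two
    exact this k τ hτ ((inv_le_iff_one_le_mul₀ hτ).mp hk.le)
  intro k
  induction k with
  | zero => exact fun τ _ h => jacobiTheta_ne_zero_of_one_le_im (by simpa using h)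
  | succ k ih =>
    intro τ hτ h h0
    have him : im (2 * τ + 1) = 2 * im τ := by simp
    exact ih (2 * τ + 1) (by rw [him]; positivity)
      (by rw [him, ← mul_assoc, ← pow_succ]; exact h) (jacobiTheta_two_mul_add_one_eq_zero hτ h0)

lemma thetaChar_half_zero_s7 (τ : ℂ) : thetaChar (1 / 2) 0 0 τ = thetaTwo τ := by
  rw [thetaChar, thetaTwo]
  congr 2 <;> push_cast <;> ring

lemma thetaChar_zero_half_s7 (τ : ℂ) : thetaChar 0 (1 / 2) 0 τ = thetaFour τ := by
  simp [thetaChar, thetaFour]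

lemma neg_sq_add_sq_div_mul_ne_two {K : Type*} [Field K] [NeZero (2 : K)] {a b : K}
    (h : a + b ≠ 0) : -(a ^ 2 + b ^ 2) / (a * b) ≠ 2 := by
  intro hk
  have hab : a * b ≠ 0 := by
    rintro hab
    rw [hab, div_zero] at hk
    exact two_ne_zero hk.symm
  rw [div_eq_iff hab] at hk
  exact h (pow_eq_zero_iff two_ne_zero |>.mp (by linear_combination -hk))

/-- for every τ in the upper half plane, `k(τ) ≠ 2`. -/
theorem kFun_ne_two (τ : UpperHalfPlane) : kFun (τ : ℂ) ≠ 2 := by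
  have hsum : thetaTwo τ ^ 4 + thetaFour τ ^ 4 ≠ 0 := by
    rw [← jacobiTheta_pow_four τ.im_pos]
    exact pow_ne_zero 4 (jacobiTheta_ne_zero τ.im_pos)
  have hk := neg_sq_add_sq_div_mul_ne_two hsum
  rwa [← pow_mul, ← pow_mul, ← thetaChar_half_zero_s7, ← thetaChar_zero_half_s7] at hk
end
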